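/- Let L be a Legendrian knot in a real tight contact 3-manifold (M, ξ, c) and suppose that in a neighborhood of L the real structure c is isotopic through real structures to c_3 (the free involution acting as rotation by half a turn in the longitudinal direction of a tubular neighborhood S^1 × D^2 of L). Then the twisting number of ξ along L with respect to any c-invariant framing is odd. -/

import Mathlib

/-!
# Statement 14

Let `L` be a Legendrian knot in a real tight contact 3-manifold `(M, ξ, c)` and
suppose that in a neighborhood of `L` the real structure `c` is isotopic through
real structures to `c₃` — the free involution acting as rotation by half a turn in
the longitudinal direction of a tubular neighborhood `S¹ × D²` of `L`.  Then the
twisting number of `ξ` along `L` with respect to any `c`-invariant framing is odd.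

We formalize this on an invariant tubular neighborhood of `L`:  a tubular
neighborhood on which the real structure *is* `c₃` (which is what "isotopic to
`c₃` through real structures near `L`" provides, after an equivariant change of
the tubular coordinates).  The neighborhood is the solid torus `S¹ × D²`, presented
in the universal cover of its core direction: coordinates `(y, (u, v)) ∈ ℝ × D²`,
all structures periodic of period 1 in `y`, with `L` the core `y ↦ (y, 0, 0)` and
`c₃ : (y, (u, v)) ↦ (y + 1/2, (u, v))`.  A `c`-invariant framing is a nonvanishing
normal vector field along `L` invariant under `c₃`, i.e. of period `1/2`; the
twisting number `n` of `ξ = ker α` along `L` relative to the framing is the number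
of full turns the Legendrian line field `ξ ∩ (normal plane)` makes relative to the
framing as `y` traverses one period.
-/
noncomputable section

open Set Metric

/-- Ambient three-dimensional space `ℝ³ = ℝ × ℝ × ℝ`. -/
abbrev V3 : Type := ℝ × ℝ × ℝ

/-- A 1-form on `ℝ³`, given pointwise by continuous linear functionals. -/
abbrev OneForm : Type := V3 → V3 →L[ℝ] ℝ

/-- The exterior derivative `dα` of a 1-form, evaluated at `p` on a pair of vectors. -/
def extDer (α : OneForm) (p : V3) (v w : V3) : ℝ :=
  fderiv ℝ α p v w - fderiv ℝ α p w v

/-- `(α ∧ dα)(u,v,w)` at `p`. -/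
def wedgeEval (α : OneForm) (p : V3) (u v w : V3) : ℝ :=
  α p u * extDer α p v w - α p v * extDer α p u w + α p w * extDer α p u v

/-- `α` is a smooth positive contact form on `S ⊆ ℝ³`. -/
def IsPositiveContactOn (α : OneForm) (S : Set V3) : Prop :=
  ContDiff ℝ (⊤ : ℕ∞) α ∧ ∀ p ∈ S, 0 < wedgeEval α p (1, 0, 0) (0, 1, 0) (0, 0, 1)

/-- `α` is `c`-real on `S`:  `c*α = -α`. -/
def IsRealOn (c : V3 → V3) (α : OneForm) (S : Set V3) : Prop :=
  ∀ p ∈ S, ∀ v : V3, α (c p) (fderiv ℝ c p v) = - α p v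

/-- An overtwisted disk for `α` inside `S`: an embedded smooth disk which is
tangent to the contact planes along its (Legendrian) boundary. -/
def IsOvertwistedDisk (α : OneForm) (S : Set V3) (f : ℝ × ℝ → V3) : Prop :=
  ContDiff ℝ (⊤ : ℕ∞) f ∧ InjOn f (closedBall 0 1) ∧ f '' closedBall 0 1 ⊆ S ∧
    (∀ q ∈ closedBall (0 : ℝ × ℝ) 1, Function.Injective (fderiv ℝ f q)) ∧
    ∀ q : ℝ × ℝ, ‖q‖ = 1 →
      (LinearMap.range (fderiv ℝ f q : ℝ × ℝ →ₗ[ℝ] V3) : Submodule ℝ V3) = LinearMap.ker (α (f q) : V3 →ₗ[ℝ] ℝ)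

/-- Tightness of `α` on `S`: there is no overtwisted disk contained in `S`. -/
def TightOn (α : OneForm) (S : Set V3) : Prop := ¬ ∃ f, IsOvertwistedDisk α S f

/-- `X` is a contact vector field for `α` on `U` (its flow preserves `ker α`),
i.e. `L_X α = μ • α` for some function `μ`. -/
def IsContactField (α : OneForm) (X : V3 → V3) (U : Set V3) : Prop :=
  ContDiffOn ℝ (⊤ : ℕ∞) X U ∧ ∃ μ : V3 → ℝ, ∀ p ∈ U, ∀ v : V3,
    fderiv ℝ α p (X p) v + α p (fderiv ℝ X p v) = μ p * α p v

open Real in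
/-- Parametrization of the boundary torus of the solid torus: the torus coordinates
`(x, y) ∈ ℝ²/ℤ²` (`x` meridional, `y` longitudinal) map to
`(y, cos 2πx, sin 2πx) ∈ ℝ³`. -/
def Theta : ℝ × ℝ → V3 := fun x => (x.2, cos (2 * π * x.1), sin (2 * π * x.1))

/-- A continuous map of the plane commuting with the deck transformations of
`ℝ² → ℝ²/ℤ² = T²` (hence descending to a torus map homotopic to the identity). -/
def DeckMap (h : ℝ × ℝ → ℝ × ℝ) : Prop :=
  Continuous h ∧ ∀ (x : ℝ × ℝ) (m n : ℤ), h (x.1 + m, x.2 + n) = ((h x).1 + m, (h x).2 + n)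

/-- A homeomorphism of the torus `ℝ²/ℤ²` isotopic to the identity, presented by a
deck-equivariant homeomorphism of `ℝ²`. -/
def DeckHomeo (h : ℝ × ℝ → ℝ × ℝ) : Prop :=
  DeckMap h ∧ ∃ g, DeckMap g ∧ (∀ x, g (h x) = x) ∧ (∀ x, h (g x) = x)

/-- The union of `n` evenly spaced parallel lines in `ℝ²/ℤ²` in the direction
`d = (p, q)` (a curve of slope `q / p`), drawn in the universal cover `ℝ²`. -/
def LineSet (n : ℕ) (d : ℤ × ℤ) : Set (ℝ × ℝ) :=
  {x | ∃ k : ℤ, (n : ℝ) * ((d.2 : ℝ) * x.1 - (d.1 : ℝ) * x.2) = (k : ℝ)}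

/-- The dividing set determined on the parametrized torus `f` by a transverse
contact vector field `X`: the locus where `X` is tangent to the contact planes. -/
def DividingSet (α : OneForm) (f : ℝ × ℝ → V3) (X : V3 → V3) : Set V3 :=
  {p | p ∈ range f ∧ α p (X p) = 0}

/-- The (parametrized) torus `f : ℝ²/ℤ² → ℝ³` is a convex surface for `α` whose
dividing set consists of exactly `n` parallel essential curves in the direction
`d = (p,q)`, i.e. of slope `q/p`:  there is a contact vector field `X` transverse to
the torus whose dividing set is, up to a homeomorphism of the torus isotopic to the
identity, the union of `n` parallel lines of slope `q/p`. -/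
def ConvexWithDividing (α : OneForm) (f : ℝ × ℝ → V3) (n : ℕ) (d : ℤ × ℤ) : Prop :=
  ∃ (U : Set V3) (X : V3 → V3), IsOpen U ∧ range f ⊆ U ∧ IsContactField α X U ∧
    (∀ x : ℝ × ℝ, X (f x) ∉
      Submodule.span ℝ ({fderiv ℝ f x (1, 0), fderiv ℝ f x (0, 1)} : Set V3)) ∧
    ∃ h, DeckHomeo h ∧ DividingSet α f X = f '' (h '' LineSet n d)

/-- The solid torus `S¹ × D²`, presented in its universal cover along the core:
points `(y, u, v)` with `(u,v)` in the unit disk; all structures are taken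
periodic of period `1` in the longitudinal coordinate `y`. -/
def SolidTorus : Set V3 := {p | p.2.1 ^ 2 + p.2.2 ^ 2 ≤ 1}

/-- Periodicity in the longitudinal coordinate: `α` is a 1-form on `S¹ × D²`. -/
def LongPeriodic (α : OneForm) : Prop := ∀ p : V3, α (p.1 + 1, p.2.1, p.2.2) = α p

/-- The real structure `c₃` on the solid torus: rotation by half a turn in the
longitudinal direction, `(y, (x, t)) ↦ (y + 1/2, (x, t))`. -/
def c3 : V3 → V3 := fun p => (p.1 + 1 / 2, p.2.1, p.2.2)

/-- A `c₃`-real tight (positive) contact structure on the solid torus. -/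
def RealTightSolidTorus (α : OneForm) : Prop :=
  LongPeriodic α ∧ IsPositiveContactOn α SolidTorus ∧ IsRealOn c3 α SolidTorus ∧
    TightOn α SolidTorus

/-- The boundary of the solid torus is convex with exactly two dividing curves of
slope `d.2 / d.1` (`d` a primitive integral direction vector; slope `∞` is `d = (0, ±1)`). -/
def BoundarySlope (α : OneForm) (d : ℤ × ℤ) : Prop :=
  IsCoprime d.1 d.2 ∧ ConvexWithDividing α Theta 2 d

/-- The core `y ↦ (y, 0, 0)` of the solid torus is Legendrian for `α`. -/
def CoreLegendrian (α : OneForm) : Prop := ∀ y : ℝ, α (y, 0, 0) ((1, 0, 0) : V3) = 0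

/-- A `c₃`-invariant framing of the core: a continuous nonvanishing normal vector
field along the core, invariant under `c₃` (hence of period `1/2`). -/
def InvariantFraming (F : ℝ → ℝ × ℝ) : Prop :=
  Continuous F ∧ (∀ y, F y ≠ 0) ∧ ∀ y, F (y + 1 / 2) = F y

open Real in
/-- The twisting of `ξ = ker α` along the core relative to the framing `F` equals
`n`: continuous angle functions `θ` (for the line `ξ ∩ normal plane`) and `φ` (for
`F`) differ by `2πn` over one period of the core. -/
def TwistingNumber (α : OneForm) (F : ℝ → ℝ × ℝ) (n : ℤ) : Prop :=
  ∃ θ φ : ℝ → ℝ, Continuous θ ∧ Continuous φ ∧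
    (∀ y : ℝ, α (y, 0, 0) ((0, cos (θ y), sin (θ y)) : V3) = 0) ∧
    (∀ y : ℝ, ∃ ρ : ℝ, 0 < ρ ∧ F y = ρ • ((cos (φ y), sin (φ y)) : ℝ × ℝ)) ∧
    (θ 1 - θ 0) - (φ 1 - φ 0) = 2 * π * n

/-- A continuous real function taking values in `c·ℤ` (`c > 0`) is constant. -/
lemma aux_const_of_mul_int {g : ℝ → ℝ} {c : ℝ} (hc : 0 < c) (hg : Continuous g)
    (h : ∀ y, ∃ k : ℤ, g y = k * c) (a b : ℝ) : g a = g b := by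
  have key : ∀ u v : ℝ, g u < g v → False := by
    intro u v huv
    obtain ⟨k₁, h₁⟩ := h u
    obtain ⟨k₂, h₂⟩ := h v
    have hk : k₁ < k₂ := by
      by_contra hle
      push_neg at hle
      have : (k₂ : ℝ) * c ≤ (k₁ : ℝ) * c := by
        apply mul_le_mul_of_nonneg_right _ hc.le
        exact_mod_cast hle
      linarith [h₁ ▸ h₂ ▸ huv]
    have hk' : (k₁ : ℝ) + 1 ≤ (k₂ : ℝ) := by exact_mod_cast hk
    have hmem : g u + c / 2 ∈ Set.uIcc (g u) (g v) := by
      apply Set.mem_uIcc.2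
      left
      constructor
      · linarith
      · rw [h₁, h₂]; nlinarith
    obtain ⟨y, -, hy⟩ := intermediate_value_uIcc (hg.continuousOn (s := Set.uIcc u v)) hmem
    obtain ⟨k, hky⟩ := h y
    rw [hky, h₁] at hy
    have : ((2 * (k - k₁) : ℤ) : ℝ) * c = c := by push_cast; ring_nf; ring_nf at hy; linarith
    have h2 : ((2 * (k - k₁) : ℤ) : ℝ) = 1 := by
      exact mul_right_cancel₀ hc.ne' (by rw [this, one_mul])
    have : (2 * (k - k₁) : ℤ) = 1 := by exact_mod_cast h2
    omega
  rcases lt_trichotomy (g a) (g b) with h' | h' | h'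
  · exact absurd h' (fun h'' => (key a b h'').elim)
  · exact h'
  · exact absurd h' (fun h'' => (key b a h'').elim)

lemma aux_fderiv_c3 (p : V3) : fderiv ℝ c3 p = ContinuousLinearMap.id ℝ V3 := by
  have hc3 : c3 = fun q : V3 => q + ((1 / 2 : ℝ), (0 : ℝ), (0 : ℝ)) := by
    funext q
    simp [c3, Prod.ext_iff]
  rw [hc3, fderiv_add_const, fderiv_id']

lemma aux_core_mem (y : ℝ) : ((y, 0, 0) : V3) ∈ SolidTorus := by
  simp [SolidTorus]

/-- The real condition on the core: `α (y + 1/2, 0, 0) = - α (y, 0, 0)`. -/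
lemma aux_real_core {α : OneForm} (hreal : IsRealOn c3 α SolidTorus) (y : ℝ) (v : V3) :
    α (y + 1 / 2, 0, 0) v = - α (y, 0, 0) v := by
  have := hreal (y, 0, 0) (aux_core_mem y) v
  rw [aux_fderiv_c3] at this
  simpa [c3] using this

open Real in
/-- If `α` kills the core direction and both normal directions at a core point, it
contradicts the contact condition. -/
lemma aux_s_ne_zero {α : OneForm} (hpos : IsPositiveContactOn α SolidTorus)
    (hL : CoreLegendrian α) (y t : ℝ)
    (h1 : α (y, 0, 0) ((0, cos t, sin t) : V3) = 0) :
    α (y, 0, 0) ((0, -sin t, cos t) : V3) ≠ 0 := by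
  intro h2
  set p : V3 := (y, 0, 0) with hp
  have e2 : ((0, 1, 0) : V3) = cos t • ((0, cos t, sin t) : V3)
      + (-sin t) • ((0, -sin t, cos t) : V3) := by
    simp only [Prod.smul_mk, smul_eq_mul, Prod.mk_add_mk, Prod.ext_iff]
    refine ⟨by ring, ?_, by ring⟩
    have := sin_sq_add_cos_sq t
    nlinarith
  have e3 : ((0, 0, 1) : V3) = sin t • ((0, cos t, sin t) : V3)
      + cos t • ((0, -sin t, cos t) : V3) := by
    simp only [Prod.smul_mk, smul_eq_mul, Prod.mk_add_mk, Prod.ext_iff]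
    refine ⟨by ring, by ring, ?_⟩
    have := sin_sq_add_cos_sq t
    nlinarith
  have a2 : α p ((0, 1, 0) : V3) = 0 := by
    rw [e2, map_add, map_smul, map_smul, h1, h2]; simp
  have a3 : α p ((0, 0, 1) : V3) = 0 := by
    rw [e3, map_add, map_smul, map_smul, h1, h2]; simp
  have hw := hpos.2 p (aux_core_mem y)
  rw [wedgeEval, hL y, a2, a3] at hw
  simp at hw

/-- If `L` is a Legendrian knot in a real tight contact
3-manifold whose real structure is (isotopic through real structures to) `c₃` near
`L`, then the twisting number of the contact structure along `L` with respect to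
any `c`-invariant framing is odd. -/
theorem twisting_number_of_c3_invariant_legendrian_is_odd
    (α : OneForm) (F : ℝ → ℝ × ℝ) (n : ℤ)
    (hα : RealTightSolidTorus α) (hL : CoreLegendrian α)
    (hF : InvariantFraming F) (hn : TwistingNumber α F n) :
    Odd n := by
  classical
  obtain ⟨hper, hpos, hreal, htight⟩ := hα
  obtain ⟨hFcont, hFne, hFinv⟩ := hF
  obtain ⟨θ, φ, hθc, hφc, hθ, hφ, hsum⟩ := hn
  have hπ : (0 : ℝ) < Real.pi := Real.pi_pos
  -- the normal "co-Legendrian" function s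
  set s : ℝ → ℝ := fun y => α (y, 0, 0) ((0, -Real.sin (θ y), Real.cos (θ y)) : V3) with hs
  have hscont : Continuous s := by
    apply Continuous.clm_apply
    · exact hpos.1.continuous.comp (by fun_prop)
    · fun_prop
  have hsne : ∀ y, s y ≠ 0 := fun y => aux_s_ne_zero hpos hL y (θ y) (hθ y)
  -- the angle jump g is a multiple of π
  set g : ℝ → ℝ := fun y => θ (y + 1 / 2) - θ y with hg
  have hgc : Continuous g := by fun_prop
  have hgint : ∀ y, ∃ k : ℤ, g y = k * Real.pi := by
    intro y
    have hkill : α (y, 0, 0) ((0, Real.cos (θ (y + 1 / 2)), Real.sin (θ (y + 1 / 2))) : V3) = 0 := by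
      have := aux_real_core hreal y
        ((0, Real.cos (θ (y + 1 / 2)), Real.sin (θ (y + 1 / 2))) : V3)
      rw [hθ (y + 1 / 2)] at this
      linarith
    have hdecomp : ((0, Real.cos (θ (y + 1 / 2)), Real.sin (θ (y + 1 / 2))) : V3)
        = Real.cos (g y) • ((0, Real.cos (θ y), Real.sin (θ y)) : V3)
          + Real.sin (g y) • ((0, -Real.sin (θ y), Real.cos (θ y)) : V3) := by
      have h1 : θ (y + 1 / 2) = θ y + g y := by simp [hg]
      simp only [Prod.smul_mk, smul_eq_mul, Prod.mk_add_mk, Prod.ext_iff, h1,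
        Real.cos_add, Real.sin_add]
      refine ⟨by ring, by ring, by ring⟩
    rw [hdecomp, map_add, map_smul, map_smul, hθ y] at hkill
    have hsin : Real.sin (g y) = 0 := by
      have : Real.sin (g y) * s y = 0 := by
        simpa [hs, smul_eq_mul] using hkill
      exact (mul_eq_zero.1 this).resolve_right (hsne y)
    obtain ⟨k, hk⟩ := Real.sin_eq_zero_iff.1 hsin
    exact ⟨k, hk.symm⟩
  obtain ⟨k, hk⟩ := hgint 0
  have hgconst : ∀ y, g y = k * Real.pi := fun y =>
    (aux_const_of_mul_int hπ hgc hgint y 0).trans hk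
  -- k is odd, by the coorientation-sign argument
  have hkodd : Odd k := by
    rw [← Int.not_even_iff_odd]
    intro ⟨m, hm⟩
    have hθhalf : θ (0 + 1 / 2) = θ 0 + (m : ℝ) * (2 * Real.pi) := by
      have h0 := hgconst 0
      simp only [hg] at h0
      rw [hm] at h0
      push_cast at h0
      linarith
    have hs2 : s (0 + 1 / 2) = - s 0 := by
      simp only [hs]
      rw [aux_real_core hreal 0, hθhalf, Real.sin_add_int_mul_two_pi,
        Real.cos_add_int_mul_two_pi]
    have hmem : (0 : ℝ) ∈ Set.uIcc (s 0) (s (0 + 1 / 2)) := by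
      rw [hs2, Set.mem_uIcc]
      rcases le_total (s 0) 0 with h | h
      · exact Or.inl ⟨h, by linarith⟩
      · exact Or.inr ⟨by linarith, h⟩
    obtain ⟨y, -, hy⟩ := intermediate_value_uIcc
      (hscont.continuousOn (s := Set.uIcc (0 : ℝ) (0 + 1 / 2))) hmem
    exact hsne y hy
  -- the framing jump is a multiple of 2π
  set h : ℝ → ℝ := fun y => φ (y + 1 / 2) - φ y with hh
  have hhc : Continuous h := by fun_prop
  have hhint : ∀ y, ∃ m : ℤ, h y = m * (2 * Real.pi) := by
    intro y
    obtain ⟨ρ₁, hρ₁, hF₁⟩ := hφ y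
    obtain ⟨ρ₂, hρ₂, hF₂⟩ := hφ (y + 1 / 2)
    have hFF : ρ₂ • ((Real.cos (φ (y + 1 / 2)), Real.sin (φ (y + 1 / 2))) : ℝ × ℝ)
        = ρ₁ • ((Real.cos (φ y), Real.sin (φ y)) : ℝ × ℝ) := by
      rw [← hF₁, ← hF₂, hFinv]
    simp only [Prod.smul_mk, smul_eq_mul, Prod.ext_iff] at hFF
    obtain ⟨hc1, hc2⟩ := hFF
    have hsq : ρ₂ ^ 2 = ρ₁ ^ 2 := by
      have q1 : (ρ₂ * Real.cos (φ (y + 1 / 2))) ^ 2 = (ρ₁ * Real.cos (φ y)) ^ 2 := by rw [hc1]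
      have q2 : (ρ₂ * Real.sin (φ (y + 1 / 2))) ^ 2 = (ρ₁ * Real.sin (φ y)) ^ 2 := by rw [hc2]
      have e1 := Real.sin_sq_add_cos_sq (φ (y + 1 / 2))
      have e2 := Real.sin_sq_add_cos_sq (φ y)
      nlinarith [q1, q2, e1, e2, sq_nonneg ρ₂, sq_nonneg ρ₁]
    have hρeq : ρ₂ = ρ₁ := by nlinarith [hsq, hρ₁, hρ₂]
    have hcos1 : Real.cos (h y) = 1 := by
      rw [hρeq] at hc1 hc2
      have hexp : ρ₁ * Real.cos (h y) = ρ₁ * 1 := by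
        simp only [hh, Real.cos_sub, mul_one]
        linear_combination Real.cos (φ y) * hc1 + Real.sin (φ y) * hc2 +
          ρ₁ * Real.sin_sq_add_cos_sq (φ y)
      exact mul_left_cancel₀ hρ₁.ne' hexp
    obtain ⟨m, hm⟩ := (Real.cos_eq_one_iff (h y)).1 hcos1
    exact ⟨m, hm.symm⟩
  obtain ⟨m, hm⟩ := hhint 0
  have hhconst : ∀ y, h y = m * (2 * Real.pi) := fun y =>
    (aux_const_of_mul_int (by linarith) hhc hhint y 0).trans hm
  -- compute the total turning
  have hθtot : θ 1 - θ 0 = 2 * k * Real.pi := by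
    have h1 := hgconst 0
    have h2 := hgconst (1 / 2)
    simp only [hg] at h1 h2
    norm_num at h1 h2
    linarith
  have hφtot : φ 1 - φ 0 = 2 * m * (2 * Real.pi) := by
    have h1 := hhconst 0
    have h2 := hhconst (1 / 2)
    simp only [hh] at h1 h2
    norm_num at h1 h2
    linarith
  have hneq : (n : ℝ) = (k : ℝ) - 2 * m := by
    rw [hθtot, hφtot] at hsum
    have := hsum
    field_simp at this ⊢
    nlinarith [hπ]
  have : n = k - 2 * m := by exact_mod_cast hneq
  obtain ⟨j, hj⟩ := hkodd
  exact ⟨j - m, by omega⟩
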